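/- arXiv:2208.10331 — 3 statements merged into one kernel-verified Lean document; each statement's English description precedes it below -/
import Mathlib

section
/- The dual Cauchy identity: Σ_λ s_λ(x_1,...,x_n) s_{λ'}(y_1,...,y_k) = Π_{i=1}^n Π_{j=1}^k (1 + x_i y_j), where the sum runs over all partitions λ contained in the n×k rectangle and λ' denotes the conjugate partition. -/
/-- q-integer `[m]_q = (1-q^m)/(1-q)`. -/
noncomputable def qnum (q : ℝ) (m : ℕ) : ℝ := (1 - q ^ m) / (1 - q)

/-- q-factorial `[m]_q!`. -/
noncomputable def qfact (q : ℝ) (m : ℕ) : ℝ := ∏ j ∈ Finset.range m, qnum q (j + 1)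

/-- Schur polynomial (bialternant formula): ratio of the generalized Vandermonde
determinant with exponents `a_i = λ_i + n - i` to the Vandermonde determinant. -/
noncomputable def schur (n : ℕ) (lam : Fin n → ℕ) (x : Fin n → ℝ) : ℝ :=
  Matrix.det (Matrix.of fun i j : Fin n => x j ^ (lam i + (n - 1 - (i : ℕ)))) /
    Matrix.det (Matrix.of fun i j : Fin n => x j ^ (n - 1 - (i : ℕ)))

/-- Conjugate partition: `λ´_j = #{i : λ_i > j}` (0-indexed `j`). -/
noncomputable def conj (n k : ℕ) (lam : Fin n → ℕ) (j : Fin k) : ℕ :=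
  (Finset.univ.filter (fun i : Fin n => (j : ℕ) < lam i)).card

/-! The columns `(x_i ^ r)_r` and `((-y_j) ^ (n + k - 1 - r))_r` form a projective Vandermonde
matrix, whose determinant is `V(x) V(y) ∏ (1 + x_i y_j)`. Expanding this determinant by Laplace
along the `x`-columns gives a sum over the `n`-subsets `S` of the rows. Writing
`S = {λ_i + n - 1 - i}` makes `λ` run over the partitions in the `n × k` box, and then the
complement of `S` is `{n + j - λ'_j}`. So, up to sign, the two minors are the alternants
`a_{λ+δ}(x)` and `a_{λ'+δ}(y)`, and the signs cancel because `|λ| = |λ'|`. -/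

open Finset Matrix
open Equiv (Perm)

namespace Finset

section LinearOrder

variable {α : Type*} [LinearOrder α] {n : ℕ}

theorem card_filter_eq_card_filter_orderEmbOfFin (S : Finset α) (hS : S.card = n)
    (p : α → Prop) [DecidablePred p] :
    #(S.filter p) = #{i | p (S.orderEmbOfFin hS i)} := by
  conv_lhs => rw [← S.image_orderEmbOfFin_univ hS, filter_image]
  exact card_image_of_injective _ (S.orderEmbOfFin hS).injective

theorem image_univ_orderEmbOfFin_perm (S : Finset α) (hS : S.card = n) (σ : Perm (Fin n)) :
    univ.image (fun i => S.orderEmbOfFin hS (σ i)) = S :=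
  calc univ.image (fun i => S.orderEmbOfFin hS (σ i))
      = (univ.image σ).image (S.orderEmbOfFin hS) := by rw [image_image]; rfl
    _ = S := by rw [image_univ_equiv, image_orderEmbOfFin_univ]

theorem card_filter_lt_orderEmbOfFin (S : Finset α) (hS : S.card = n) (i : Fin n) :
    #(S.filter (· < S.orderEmbOfFin hS i)) = i := by
  simp [card_filter_eq_card_filter_orderEmbOfFin S hS, ← Fin.card_Iio, Finset.filter_gt_eq_Iio]

end LinearOrder

theorem card_compl_of_card_eq {n k : ℕ} {S : Finset (Fin (n + k))} (hS : S.card = n) :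
    Sᶜ.card = k := by
  rw [card_compl, Fintype.card_fin, hS, Nat.add_sub_cancel_left]

theorem val_orderEmbOfFin_eq_add_card {N n m : ℕ} {S T : Finset (Fin N)} (hST : Sᶜ = T)
    (hS : S.card = n) (hT : T.card = m) (i : Fin n) :
    (S.orderEmbOfFin hS i : ℕ) =
      i + #{j | T.orderEmbOfFin hT j < S.orderEmbOfFin hS i} := by
  set u := S.orderEmbOfFin hS i
  rw [← card_filter_eq_card_filter_orderEmbOfFin T hT (· < u), ← hST,
    ← card_filter_lt_orderEmbOfFin S hS i, ← card_union_of_disjoint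
      (disjoint_filter_filter disjoint_compl_right), ← filter_union, union_compl,
    filter_gt_eq_Iio, Fin.card_Iio]

end Finset

theorem OrderEmbedding.lt_card_filter_lt_iff {α : Type*} [LinearOrder α] {k : ℕ} (g : Fin k ↪o α)
    (j : Fin k) (u : α) : (j : ℕ) < #{j' | g j' < u} ↔ g j < u := by
  constructor
  · intro hj
    by_contra! hu
    have : ({j' | g j' < u} : Finset _) ⊆ Iio j := fun j' hj' =>
      mem_Iio.mpr (g.lt_iff_lt.mp ((mem_filter.mp hj').2.trans_le hu))
    exact (card_le_card this).not_gt (by rwa [Fin.card_Iio])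
  · intro hu
    have : Iic j ⊆ ({j' | g j' < u} : Finset _) := fun j' hj' =>
      mem_filter.mpr ⟨mem_univ _, (g.le_iff_le.mpr (mem_Iic.mp hj')).trans_lt hu⟩
    simpa using card_le_card this

theorem Fin.prod_prod_Ioi_add {M : Type*} [CommMonoid M] {n k : ℕ}
    (F : Fin (n + k) → Fin (n + k) → M) :
    ∏ c, ∏ c' ∈ Ioi c, F c c' =
      (∏ i, ∏ i' ∈ Ioi i, F (castAdd k i) (castAdd k i')) *
        (∏ i, ∏ j, F (castAdd k i) (natAdd n j)) *
        ∏ j, ∏ j' ∈ Ioi j, F (natAdd n j) (natAdd n j') := by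
  have castAdd_lt_natAdd (i : Fin n) (j : Fin k) : castAdd k i < natAdd n j := by
    rw [Fin.lt_def, Fin.val_castAdd, Fin.val_natAdd]; omega
  have castAdd_lt_castAdd (i i' : Fin n) : castAdd k i < castAdd k i' ↔ i < i' := by
    rw [Fin.lt_def, Fin.val_castAdd, Fin.val_castAdd, Fin.lt_def]
  simp_rw [← filter_lt_eq_Ioi, prod_filter, Fin.prod_univ_add, prod_mul_distrib]
  simp [castAdd_lt_natAdd, (castAdd_lt_natAdd _ _).not_gt, castAdd_lt_castAdd]

theorem Fin.sign_revPerm (m : ℕ) :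
    Perm.sign (Fin.revPerm : Perm (Fin m)) = (-1 : ℤˣ) ^ ∑ i : Fin m, (m - 1 - (i : ℕ)) := by
  rw [Perm.sign_eq_prod_prod_Ioi, ← prod_pow_eq_pow_sum univ (fun i : Fin m => m - 1 - (i : ℕ))]
  refine prod_congr rfl fun i _ => ?_
  rw [← Fin.card_Ioi, ← Finset.prod_const]
  exact prod_congr rfl fun j hj => if_neg (Fin.rev_lt_rev.not.mpr (mem_Ioi.mp hj).not_gt)

namespace Finset

variable {n k : ℕ} {S : Finset (Fin (n + k))}

theorem orderEmbOfFin_ne_orderEmbOfFin_compl (hS : S.card = n) (i : Fin n) (j : Fin k) :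
    S.orderEmbOfFin hS i ≠ Sᶜ.orderEmbOfFin (card_compl_of_card_eq hS) j := fun h =>
  mem_compl.mp (h ▸ Sᶜ.orderEmbOfFin_mem _ j) (S.orderEmbOfFin_mem hS i)

noncomputable def shufflePerm (hS : S.card = n) : Perm (Fin (n + k)) :=
  Equiv.ofBijective (Fin.append (S.orderEmbOfFin hS) (Sᶜ.orderEmbOfFin (card_compl_of_card_eq hS)))
    (Fin.append_injective_iff.mpr ⟨(S.orderEmbOfFin hS).injective,
      (Sᶜ.orderEmbOfFin _).injective, orderEmbOfFin_ne_orderEmbOfFin_compl hS⟩).bijective_of_finite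

@[simp]
theorem shufflePerm_castAdd (hS : S.card = n) (i : Fin n) :
    shufflePerm hS (Fin.castAdd k i) = S.orderEmbOfFin hS i := by
  simp [shufflePerm]

@[simp]
theorem shufflePerm_natAdd (hS : S.card = n) (j : Fin k) :
    shufflePerm hS (Fin.natAdd n j) = Sᶜ.orderEmbOfFin (card_compl_of_card_eq hS) j := by
  simp [shufflePerm]

/-- The inversions of `shufflePerm hS` are the pairs of an element of `S` and a smaller element
of `Sᶜ`. -/
theorem sign_shufflePerm (hS : S.card = n) :
    Perm.sign (shufflePerm hS) = (-1) ^ ∑ i : Fin n,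
      #{j | Sᶜ.orderEmbOfFin (card_compl_of_card_eq hS) j < S.orderEmbOfFin hS i} := by
  rw [Perm.sign_eq_prod_prod_Ioi, Fin.prod_prod_Ioi_add, ← prod_pow_eq_pow_sum]
  simp only [shufflePerm_castAdd, shufflePerm_natAdd, OrderEmbedding.lt_iff_lt]
  have hIoi {m : ℕ} : ∏ x : Fin m, ∏ x' ∈ Ioi x, (if x < x' then 1 else -1 : ℤˣ) = 1 :=
    prod_eq_one fun x _ => prod_eq_one fun x' hx' => if_pos (mem_Ioi.mp hx')
  rw [hIoi, hIoi, one_mul, mul_one]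
  refine prod_congr rfl fun i _ => ?_
  rw [prod_ite, prod_const_one, one_mul, prod_const]
  congr 2
  ext j
  simp [le_iff_lt_or_eq, (orderEmbOfFin_ne_orderEmbOfFin_compl hS i j).symm]

theorem shufflePerm_mul_permCongr_castAdd (hS : S.card = n) (α : Perm (Fin n))
    (β : Perm (Fin k)) (i : Fin n) :
    (shufflePerm hS * finSumFinEquiv.permCongr (α.sumCongr β)) (Fin.castAdd k i) =
      S.orderEmbOfFin hS (α i) := by
  simp [Equiv.permCongr_apply]

theorem shufflePerm_mul_permCongr_natAdd (hS : S.card = n) (α : Perm (Fin n))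
    (β : Perm (Fin k)) (j : Fin k) :
    (shufflePerm hS * finSumFinEquiv.permCongr (α.sumCongr β)) (Fin.natAdd n j) =
      Sᶜ.orderEmbOfFin (card_compl_of_card_eq hS) (β j) := by
  simp [Equiv.permCongr_apply]

theorem bijective_shufflePerm_mul_permCongr :
    Function.Bijective fun q : {S : Finset (Fin (n + k)) // S.card = n} ×
        Perm (Fin n) × Perm (Fin k) =>
      shufflePerm q.1.2 * finSumFinEquiv.permCongr (q.2.1.sumCongr q.2.2) := by
  refine (Fintype.bijective_iff_injective_and_card _).mpr ⟨?_, ?_⟩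
  · rintro ⟨⟨S, hS⟩, α, β⟩ ⟨⟨S', hS'⟩, α', β'⟩ h
    have image_castAdd {S : Finset (Fin (n + k))} (hS : S.card = n) (α : Perm (Fin n))
        (β : Perm (Fin k)) :
        univ.image (fun i => (shufflePerm hS * finSumFinEquiv.permCongr (α.sumCongr β))
          (Fin.castAdd k i)) = S := by
      simp_rw [shufflePerm_mul_permCongr_castAdd, image_univ_orderEmbOfFin_perm]
    obtain rfl : S = S' := by
      rw [← image_castAdd hS α β, ← image_castAdd hS' α' β']
      simp only at h
      rw [h]
    have := finSumFinEquiv.permCongr.injective (mul_left_cancel h)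
    obtain ⟨rfl, rfl⟩ := Prod.ext_iff.mp (Perm.sumCongrHom_injective this)
    rfl
  · rw [Fintype.card_prod, Fintype.card_prod, Fintype.card_finset_len, Fintype.card_perm,
      Fintype.card_perm, Fintype.card_perm, Fintype.card_fin, Fintype.card_fin, ← mul_assoc]
    simpa using Nat.choose_mul_factorial_mul_factorial (Nat.le_add_right n k)

end Finset

theorem Matrix.det_eq_sum_shufflePerm {R : Type*} [CommRing R] {n k : ℕ}
    (M : Matrix (Fin (n + k)) (Fin (n + k)) R) :
    M.det = ∑ S : {S : Finset (Fin (n + k)) // S.card = n},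
      ((Perm.sign (shufflePerm S.2) : ℤ) : R) *
        ((of fun i i' => M (S.1.orderEmbOfFin S.2 i) (Fin.castAdd k i')).det *
          (of fun j j' => M (S.1ᶜ.orderEmbOfFin (card_compl_of_card_eq S.2) j)
            (Fin.natAdd n j')).det) := by
  rw [det_apply', ← bijective_shufflePerm_mul_permCongr.sum_comp, Fintype.sum_prod_type]
  refine Fintype.sum_congr _ _ fun S => ?_
  rw [det_apply', det_apply', sum_mul_sum, mul_sum, Fintype.sum_prod_type]
  simp only [mul_sum]
  refine Fintype.sum_congr _ _ fun α => Fintype.sum_congr _ _ fun β => ?_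
  simp only [Perm.sign_mul, Perm.sign_permCongr, Perm.sign_sumCongr, Fin.prod_univ_add,
    shufflePerm_mul_permCongr_castAdd, shufflePerm_mul_permCongr_natAdd, of_apply]
  push_cast
  ring

namespace Finset

variable {n k : ℕ}

def addStaircase (f : Fin n → Fin (k + 1)) (i : Fin n) : Fin (n + k) :=
  ⟨f i + (n - 1 - i), by omega⟩

theorem strictAnti_addStaircase {f : Fin n → Fin (k + 1)} (hf : Antitone fun i => (f i : ℕ)) :
    StrictAnti (addStaircase f) := fun i i' hii' => by
  have : (f i' : ℕ) ≤ f i := hf hii'.le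
  rw [Fin.lt_def] at hii' ⊢
  simp only [addStaircase]
  omega

theorem card_image_addStaircase {f : Fin n → Fin (k + 1)} (hf : Antitone fun i => (f i : ℕ)) :
    #(univ.image (addStaircase f)) = n := by
  rw [card_image_of_injective _ (strictAnti_addStaircase hf).injective, card_univ, Fintype.card_fin]

theorem orderEmbOfFin_image_addStaircase {f : Fin n → Fin (k + 1)}
    (hf : Antitone fun i => (f i : ℕ)) (i : Fin n) :
    (univ.image (addStaircase f)).orderEmbOfFin (card_image_addStaircase hf) i =
      addStaircase f i.rev := by
  rw [← orderEmbOfFin_unique (card_image_addStaircase hf)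
    (fun i => mem_image_of_mem _ (mem_univ i.rev))
    ((strictAnti_addStaircase hf).comp Fin.rev_strictAnti)]

variable {S : Finset (Fin (n + k))}

def finsetPart (hS : S.card = n) (i : Fin n) : Fin (k + 1) :=
  ⟨#{j | Sᶜ.orderEmbOfFin (card_compl_of_card_eq hS) j < S.orderEmbOfFin hS i.rev},
    Nat.lt_succ_of_le ((card_filter_le _ _).trans_eq (card_fin k))⟩

theorem antitone_finsetPart (hS : S.card = n) : Antitone fun i => (finsetPart hS i : ℕ) := by
  intro i i' hii'
  dsimp only [finsetPart]
  refine card_le_card fun j hj => ?_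
  simp only [mem_filter, mem_univ, true_and] at hj ⊢
  exact hj.trans_le ((S.orderEmbOfFin hS).monotone (Fin.rev_anti hii'))

theorem val_finsetPart_add (hS : S.card = n) (i : Fin n) :
    (finsetPart hS i : ℕ) + (n - 1 - i) = S.orderEmbOfFin hS i.rev := by
  rw [val_orderEmbOfFin_eq_add_card rfl hS (card_compl_of_card_eq hS), Fin.val_rev]
  simp only [finsetPart]
  omega

theorem addStaircase_finsetPart (hS : S.card = n) :
    addStaircase (finsetPart hS) = fun i => S.orderEmbOfFin hS i.rev :=
  funext fun i => Fin.ext (val_finsetPart_add hS i)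

def boxPartitionEquiv :
    {f : Fin n → Fin (k + 1) // Antitone fun i => (f i : ℕ)} ≃
      {S : Finset (Fin (n + k)) // S.card = n} where
  toFun f := ⟨univ.image (addStaircase f.1), card_image_addStaircase f.2⟩
  invFun S := ⟨finsetPart S.2, antitone_finsetPart S.2⟩
  left_inv := by
    rintro ⟨f, hf⟩
    ext i
    have := val_finsetPart_add (card_image_addStaircase hf) i
    rw [orderEmbOfFin_image_addStaircase hf, Fin.rev_rev] at this
    simp only [addStaircase] at this
    simp only
    omega
  right_inv := by
    rintro ⟨S, hS⟩
    ext1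
    exact (congrArg (univ.image ·) (addStaircase_finsetPart hS)).trans
      (image_univ_orderEmbOfFin_perm S hS Fin.revPerm)

/-- The complement of `{λ_i + n - 1 - i}` is `{n + j - λ'_j}`. -/
theorem conj_finsetPart_add (hS : S.card = n) (j : Fin k) :
    conj n k (fun i => finsetPart hS i) j + Sᶜ.orderEmbOfFin (card_compl_of_card_eq hS) j =
      n + j := by
  have hconj : conj n k (fun i => finsetPart hS i) j =
      #{i | Sᶜ.orderEmbOfFin (card_compl_of_card_eq hS) j < S.orderEmbOfFin hS i} := by
    simp only [conj, finsetPart, OrderEmbedding.lt_card_filter_lt_iff]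
    exact card_equiv Fin.revPerm (by simp)
  have hsplit := card_filter_add_card_filter_not (s := univ)
    (fun i => Sᶜ.orderEmbOfFin (card_compl_of_card_eq hS) j < S.orderEmbOfFin hS i)
  simp only [not_lt, le_iff_lt_or_eq, orderEmbOfFin_ne_orderEmbOfFin_compl hS _ j, or_false,
    card_univ, Fintype.card_fin] at hsplit
  rw [hconj, val_orderEmbOfFin_eq_add_card (compl_compl S) _ hS j]
  omega

end Finset

theorem sum_conj {n k : ℕ} (lam : Fin n → ℕ) (hlam : ∀ i, lam i ≤ k) :
    ∑ j, conj n k lam j = ∑ i, lam i := by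
  simp only [conj]
  rw [← sum_congr rfl fun i _ => min_eq_right (hlam i)]
  simp_rw [← Fin.card_filter_val_lt, card_filter]
  exact sum_comm

namespace Matrix

variable {R : Type*} [CommRing R] {m : ℕ}

theorem det_of_pow_rev (y : Fin m → R) (e : Fin m → ℕ) :
    (of fun i j => y j ^ e i.rev).det =
      ((Perm.sign (Fin.revPerm : Perm (Fin m)) : ℤ) : R) * (of fun i j => y j ^ e i).det :=
  det_permute Fin.revPerm (of fun i j => y j ^ e i)

theorem det_of_pow_sub_one_sub (y : Fin m → R) :
    (of fun i j : Fin m => y j ^ (m - 1 - (i : ℕ))).det =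
      (-1) ^ (∑ i : Fin m, (m - 1 - (i : ℕ))) * (vandermonde y).det := by
  rw [← det_transpose (vandermonde y)]
  convert det_of_pow_rev y (fun i => i) using 2
  · ext i j
    simp [Fin.val_rev, Nat.sub_sub, add_comm 1]
  · simp [Fin.sign_revPerm]
  · rfl

theorem det_of_neg_pow (y : Fin m → R) (e : Fin m → ℕ) :
    (of fun i j => (-y j) ^ e i).det = (-1) ^ (∑ i, e i) * (of fun i j => y j ^ e i).det := by
  simp_rw [neg_pow (y _), ← prod_pow_eq_pow_sum, ← det_mul_column]
  rfl

end Matrix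

theorem schur_eq_div_det_vandermonde {n : ℕ} (lam : Fin n → ℕ) (x : Fin n → ℝ) (e : Fin n → ℕ)
    (he : ∀ i, e i.rev = lam i + (n - 1 - i)) :
    schur n lam x = (of fun i j => x j ^ e i).det / (vandermonde x).det := by
  have hsign : ((Perm.sign (Fin.revPerm : Perm (Fin n)) : ℤ) : ℝ) ≠ 0 :=
    Int.cast_ne_zero.mpr (Units.ne_zero _)
  have hden : (of fun i j : Fin n => x j ^ (n - 1 - (i : ℕ))) =
      of fun i j => x j ^ ((i.rev : Fin n) : ℕ) := by
    ext i j
    simp [Fin.val_rev, Nat.sub_sub, add_comm 1]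
  rw [schur, hden, det_of_pow_rev x (fun i => i), ← det_transpose (vandermonde x)]
  simp_rw [← he]
  rw [det_of_pow_rev, mul_div_mul_left _ _ hsign]
  rfl

section DualCauchyMatrix

variable {R : Type*} [CommRing R] {n k : ℕ}

def dualCauchyMatrix (x : Fin n → R) (y : Fin k → R) : Matrix (Fin (n + k)) (Fin (n + k)) R :=
  (projVandermonde (Fin.append x 1) (Fin.append 1 (-y)))ᵀ

@[simp]
theorem dualCauchyMatrix_castAdd (x : Fin n → R) (y : Fin k → R) (r : Fin (n + k)) (i : Fin n) :
    dualCauchyMatrix x y r (Fin.castAdd k i) = x i ^ (r : ℕ) := by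
  simp [dualCauchyMatrix, projVandermonde_apply]

@[simp]
theorem dualCauchyMatrix_natAdd (x : Fin n → R) (y : Fin k → R) (r : Fin (n + k)) (j : Fin k) :
    dualCauchyMatrix x y r (Fin.natAdd n j) = (-y j) ^ (n + k - 1 - r) := by
  simp [dualCauchyMatrix, projVandermonde_apply, Nat.sub_sub, add_comm 1]

theorem det_dualCauchyMatrix (x : Fin n → R) (y : Fin k → R) :
    (dualCauchyMatrix x y).det = (vandermonde x).det * (vandermonde y).det *
      ∏ i, ∏ j, (1 + x i * y j) := by
  rw [dualCauchyMatrix, det_transpose, det_projVandermonde, Fin.prod_prod_Ioi_add,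
    det_vandermonde, det_vandermonde, mul_right_comm]
  simp [sub_eq_add_neg, add_comm]

theorem det_natAdd_minor_dualCauchyMatrix (x : Fin n → R) (y : Fin k → R)
    {S : Finset (Fin (n + k))} (hS : S.card = n) :
    (of fun j j' => dualCauchyMatrix x y (Sᶜ.orderEmbOfFin (card_compl_of_card_eq hS) j)
      (Fin.natAdd n j')).det =
      (-1) ^ (∑ i, (finsetPart hS i : ℕ) + ∑ j : Fin k, (k - 1 - (j : ℕ))) *
        (of fun j j' => y j' ^ (conj n k (fun i => finsetPart hS i) j + (k - 1 - j))).det := by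
  have hexp (j : Fin k) : n + k - 1 - Sᶜ.orderEmbOfFin (card_compl_of_card_eq hS) j =
      conj n k (fun i => finsetPart hS i) j + (k - 1 - j) := by
    have := conj_finsetPart_add hS j
    have := (Sᶜ.orderEmbOfFin (card_compl_of_card_eq hS) j).isLt
    omega
  rw [← sum_conj _ fun i => Nat.lt_succ_iff.mp (finsetPart hS i).2, ← sum_add_distrib,
    ← det_of_neg_pow]
  simp [hexp]

end DualCauchyMatrix

theorem sign_mul_det_mul_det_dualCauchyMatrix {n k : ℕ} {x : Fin n → ℝ} {y : Fin k → ℝ}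
    (hx : (vandermonde x).det ≠ 0) (hy : (vandermonde y).det ≠ 0)
    {S : Finset (Fin (n + k))} (hS : S.card = n) :
    ((Perm.sign (shufflePerm hS) : ℤ) : ℝ) *
      ((of fun i i' => dualCauchyMatrix x y (S.orderEmbOfFin hS i) (Fin.castAdd k i')).det *
        (of fun j j' => dualCauchyMatrix x y (Sᶜ.orderEmbOfFin (card_compl_of_card_eq hS) j)
          (Fin.natAdd n j')).det) =
      (vandermonde x).det * (vandermonde y).det *
        (schur n (fun i => finsetPart hS i) x *
          schur k (conj n k fun i => finsetPart hS i) y) := by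
  set lam : Fin n → ℕ := fun i => finsetPart hS i
  set D := ∑ j : Fin k, (k - 1 - (j : ℕ))
  have hsign : ((Perm.sign (shufflePerm hS) : ℤ) : ℝ) = (-1) ^ ∑ i, lam i := by
    rw [sign_shufflePerm, ← Equiv.sum_comp Fin.revPerm]
    push_cast
    rfl
  have hA : (of fun i i' => dualCauchyMatrix x y (S.orderEmbOfFin hS i) (Fin.castAdd k i')).det =
      schur n lam x * (vandermonde x).det := by
    rw [schur_eq_div_det_vandermonde lam x (fun i => S.orderEmbOfFin hS i)
      fun i => (val_finsetPart_add hS i).symm, div_mul_cancel₀ _ hx]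
    simp
  have hden := det_of_pow_sub_one_sub y
  have hB : (of fun i j => y j ^ (conj n k lam i + (k - 1 - i))).det =
      schur k (conj n k lam) y * ((-1) ^ D * (vandermonde y).det) := by
    rw [schur, ← hden, div_mul_cancel₀ _ (hden ▸ mul_ne_zero (pow_ne_zero _ (by norm_num)) hy)]
  have hpow : (-1 : ℝ) ^ (∑ i, lam i) * (-1) ^ (∑ i, lam i + D) * (-1) ^ D = 1 := by
    rw [← pow_add, ← pow_add]
    exact Even.neg_one_pow ⟨∑ i, lam i + D, by ring⟩
  rw [hsign, hA, det_natAdd_minor_dualCauchyMatrix x y hS, hB]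
  linear_combination (vandermonde x).det * (vandermonde y).det * schur n lam x *
    schur k (conj n k lam) y * hpow

open Classical in
/-- Partitions in the `n × k` rectangle are encoded as antitone functions `Fin n → Fin (k+1)`. -/
theorem stmt5 (n k : ℕ) (x : Fin n → ℝ) (y : Fin k → ℝ)
    (hx : Function.Injective x) (hy : Function.Injective y) :
    (∑ f ∈ Finset.univ.filter
        (fun f : Fin n → Fin (k + 1) => Antitone fun i => ((f i : ℕ))),
      schur n (fun i => (f i : ℕ)) x * schur k (conj n k (fun i => (f i : ℕ))) y) =
    ∏ i : Fin n, ∏ j : Fin k, (1 + x i * y j) := by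
  have hVx := det_vandermonde_ne_zero_iff.mpr hx
  have hVy := det_vandermonde_ne_zero_iff.mpr hy
  have hlaplace := det_eq_sum_shufflePerm (dualCauchyMatrix x y)
  simp_rw [sign_mul_det_mul_det_dualCauchyMatrix hVx hVy, ← mul_sum,
    det_dualCauchyMatrix] at hlaplace
  rw [sum_subtype (p := fun f : Fin n → Fin (k + 1) => Antitone fun i => (f i : ℕ)) _
    (fun f => by simp), ← boxPartitionEquiv.symm.sum_comp]
  exact (mul_left_cancel₀ (mul_ne_zero hVx hVy) hlaplace).symm
end

section
/- For the monic q-Krawtchouk recurrence coefficients with A_m = (1-q^{m-N})(1+p q^m)/((1+p q^{2m})(1+p q^{2m+1})) and C_m = -p q^{2m-N-1}(1+p q^{m+N})(1-q^m)/((1+p q^{2m-1})(1+p q^{2m})), after substituting p = q^{1-2n}, N = n+k-1, q = e^{-γ/n}, m = n, and letting n → ∞ with k/n → c, the limit of b_{n+1} = 1 - A_n - C_n equals (1 + e^{γ(c+1)})/2. -/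
open Filter Real

private lemma hexpz (x : ℝ) (z : ℤ) : Real.exp x ^ z = Real.exp ((z : ℝ) * x) := by
  rw [← Real.rpow_intCast, ← Real.exp_mul, mul_comm]

theorem stmt7 (γ : ℝ) (hγ : γ ≠ 0) (c : ℝ) (hc : 0 < c) (k : ℕ → ℕ) (hk1 : ∀ n, 1 ≤ k n)
    (hkc : Tendsto (fun n : ℕ => (k n : ℝ) / n) atTop (nhds c)) :
    Tendsto (fun n : ℕ =>
        let q : ℝ := Real.exp (-γ / n)
        let p : ℝ := q ^ ((1 : ℤ) - 2 * n)
        let N : ℤ := (n : ℤ) + k n - 1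
        let A : ℝ := (1 - q ^ ((n : ℤ) - N)) * (1 + p * q ^ (n : ℤ)) /
          ((1 + p * q ^ (2 * (n : ℤ))) * (1 + p * q ^ (2 * (n : ℤ) + 1)))
        let C : ℝ := -p * q ^ (2 * (n : ℤ) - N - 1) * (1 + p * q ^ ((n : ℤ) + N)) *
            (1 - q ^ (n : ℤ)) /
          ((1 + p * q ^ (2 * (n : ℤ) - 1)) * (1 + p * q ^ (2 * (n : ℤ))))
        1 - A - C)
      atTop (nhds ((1 + Real.exp (γ * (c + 1))) / 2)) := by
  have hv : Tendsto (fun n : ℕ => (1:ℝ)/n) atTop (nhds 0) := tendsto_one_div_atTop_nhds_zero_nat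
  have cexp : ∀ {f : ℕ → ℝ} {l : ℝ}, Tendsto f atTop (nhds l) →
      Tendsto (fun n => Real.exp (f n)) atTop (nhds (Real.exp l)) :=
    fun h => (Real.continuous_exp.tendsto _).comp h
  set G : ℕ → ℝ := fun n =>
    1 - (1 - Real.exp (γ * ((k n : ℝ)/n) - γ * (1/(n:ℝ)))) * (1 + Real.exp (γ - γ * (1/(n:ℝ)))) /
        ((1 + Real.exp (-γ * (1/(n:ℝ)))) * (1 + Real.exp (-(2*γ) * (1/(n:ℝ)))))
      - (-(Real.exp (γ + γ * ((k n : ℝ)/n) - γ * (1/(n:ℝ)))) * (1 + Real.exp (-γ * ((k n : ℝ)/n)))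
          * (1 - Real.exp (-γ)) / ((1 + 1) * (1 + Real.exp (-γ * (1/(n:ℝ)))))) with hG
  have l1 : Tendsto (fun n : ℕ => Real.exp (γ * ((k n : ℝ)/n) - γ * (1/(n:ℝ)))) atTop
      (nhds (Real.exp (γ * c))) := by
    simpa using cexp ((hkc.const_mul γ).sub (hv.const_mul γ))
  have l2 : Tendsto (fun n : ℕ => Real.exp (γ - γ * (1/(n:ℝ)))) atTop (nhds (Real.exp γ)) := by
    simpa using cexp ((tendsto_const_nhds (x := γ)).sub (hv.const_mul γ))
  have l3 : Tendsto (fun n : ℕ => Real.exp (-γ * (1/(n:ℝ)))) atTop (nhds 1) := by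
    simpa using cexp (hv.const_mul (-γ))
  have l4 : Tendsto (fun n : ℕ => Real.exp (-(2*γ) * (1/(n:ℝ)))) atTop (nhds 1) := by
    simpa using cexp (hv.const_mul (-(2*γ)))
  have l5 : Tendsto (fun n : ℕ => Real.exp (γ + γ * ((k n : ℝ)/n) - γ * (1/(n:ℝ)))) atTop
      (nhds (Real.exp (γ + γ * c))) := by
    simpa using cexp (((tendsto_const_nhds (x := γ)).add (hkc.const_mul γ)).sub (hv.const_mul γ))
  have l6 : Tendsto (fun n : ℕ => Real.exp (-γ * ((k n : ℝ)/n))) atTop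
      (nhds (Real.exp (-(γ * c)))) := by
    simpa [neg_mul] using cexp (hkc.const_mul (-γ))
  have hmain : Tendsto G atTop (nhds
      (1 - (1 - Real.exp (γ * c)) * (1 + Real.exp γ) / ((1 + 1) * (1 + 1))
        - (-(Real.exp (γ + γ * c)) * (1 + Real.exp (-(γ * c))) * (1 - Real.exp (-γ)) /
            ((1 + 1) * (1 + 1))))) := by
    refine (tendsto_const_nhds.sub ?_).sub ?_
    · exact ((tendsto_const_nhds.sub l1).mul (tendsto_const_nhds.add l2)).div
        ((tendsto_const_nhds.add l3).mul (tendsto_const_nhds.add l4)) (by norm_num)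
    · exact (((l5.neg).mul (tendsto_const_nhds.add l6)).mul tendsto_const_nhds).div
        (tendsto_const_nhds.mul (tendsto_const_nhds.add l3)) (by norm_num)
  have hLeq : (1 - (1 - Real.exp (γ * c)) * (1 + Real.exp γ) / ((1 + 1) * (1 + 1))
        - (-(Real.exp (γ + γ * c)) * (1 + Real.exp (-(γ * c))) * (1 - Real.exp (-γ)) /
            ((1 + 1) * (1 + 1)))) = (1 + Real.exp (γ * (c + 1))) / 2 := by
    have e1 : Real.exp (γ + γ * c) = Real.exp γ * Real.exp (γ * c) := Real.exp_add _ _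
    have e2 : Real.exp (γ * (c + 1)) = Real.exp (γ * c) * Real.exp γ := by
      rw [mul_add, mul_one, Real.exp_add]
    have e3 : Real.exp (-(γ * c)) = (Real.exp (γ * c))⁻¹ := Real.exp_neg _
    have e4 : Real.exp (-γ) = (Real.exp γ)⁻¹ := Real.exp_neg _
    have p1 : Real.exp γ ≠ 0 := Real.exp_ne_zero _
    have p2 : Real.exp (γ * c) ≠ 0 := Real.exp_ne_zero _
    rw [e1, e2, e3, e4]
    field_simp
    ring
  rw [hLeq] at hmain
  refine Tendsto.congr' ?_ hmain
  filter_upwards [eventually_ge_atTop 1] with n hn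
  have hn0 : (n : ℝ) ≠ 0 := Nat.cast_ne_zero.mpr (by omega)
  simp only [hexpz, neg_mul, ← Real.exp_add]
  have pref : ((((1:ℤ) - 2 * (n:ℤ)) : ℤ) : ℝ) = 1 - 2 * (n:ℝ) := by push_cast; ring
  have r1 : ((((n:ℤ) - ((n:ℤ) + (k n : ℤ) - 1)) : ℤ) : ℝ) * (-γ / (n:ℝ))
      = γ * ((k n : ℝ)/n) - γ * (1/(n:ℝ)) := by push_cast; field_simp; ring
  have r2 : ((((1:ℤ) - 2 * (n:ℤ)) : ℤ) : ℝ) * (-γ / (n:ℝ)) + (((n:ℤ) : ℤ) : ℝ) * (-γ / (n:ℝ))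
      = γ - γ * (1/(n:ℝ)) := by push_cast; field_simp; ring
  have r3 : ((((1:ℤ) - 2 * (n:ℤ)) : ℤ) : ℝ) * (-γ / (n:ℝ)) + (((2 * (n:ℤ)) : ℤ) : ℝ) * (-γ / (n:ℝ))
      = -γ * (1/(n:ℝ)) := by push_cast; field_simp; ring
  have r4 : ((((1:ℤ) - 2 * (n:ℤ)) : ℤ) : ℝ) * (-γ / (n:ℝ))
        + (((2 * (n:ℤ) + 1) : ℤ) : ℝ) * (-γ / (n:ℝ))
      = -(2*γ) * (1/(n:ℝ)) := by push_cast; field_simp; ring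
  have r5 : ((((1:ℤ) - 2 * (n:ℤ)) : ℤ) : ℝ) * (-γ / (n:ℝ))
        + (((2 * (n:ℤ) - ((n:ℤ) + (k n : ℤ) - 1) - 1) : ℤ) : ℝ) * (-γ / (n:ℝ))
      = γ + γ * ((k n : ℝ)/n) - γ * (1/(n:ℝ)) := by push_cast; field_simp; ring
  have r6 : ((((1:ℤ) - 2 * (n:ℤ)) : ℤ) : ℝ) * (-γ / (n:ℝ))
        + ((((n:ℤ) + ((n:ℤ) + (k n : ℤ) - 1)) : ℤ) : ℝ) * (-γ / (n:ℝ))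
      = -γ * ((k n : ℝ)/n) := by push_cast; field_simp; ring
  have r7 : (((n:ℤ) : ℝ)) * (-γ / (n:ℝ)) = -γ := by push_cast; field_simp
  have r8 : ((((1:ℤ) - 2 * (n:ℤ)) : ℤ) : ℝ) * (-γ / (n:ℝ))
        + (((2 * (n:ℤ) - 1) : ℤ) : ℝ) * (-γ / (n:ℝ)) = 0 := by
    push_cast; field_simp; ring
  rw [r1, r2, r3, r4, r5, r6, r7, r8, Real.exp_zero]
  simp only [hG, neg_mul]
end

section
/- The principal specialization of the Schur polynomial of the complement-conjugate diagram satisfies s_{λ̄'}(1,q,...,q^{k-1}) = q^{||λ̄'||} · Π_{1≤i<j≤n}[a_i - a_j]_q · Π_{l=1}^n [n+k-l]_q! / ([a_l]_q! [n+k-1-a_l]_q!), where a_i = λ_i + n - i. -/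
open Finset

lemma prod_filter_lt_eq_prod_prod_Ioi {ι M : Type*} [LinearOrder ι] [Fintype ι]
    [LocallyFiniteOrderTop ι] [CommMonoid M] (f : ι → ι → M) :
    ∏ p ∈ univ.filter (fun p : ι × ι => p.1 < p.2), f p.1 p.2 = ∏ i, ∏ j ∈ Ioi i, f i j := by
  rw [prod_filter, Fintype.prod_prod_type]
  exact prod_congr rfl fun i _ => by rw [← prod_filter, filter_lt_eq_Ioi]

lemma Fin.prod_prod_Ioi_eq_prod_pow {M : Type*} [CommMonoid M] {n : ℕ} (f : Fin n → M) :
    ∏ i, ∏ j ∈ Ioi i, f j = ∏ j, f j ^ (j : ℕ) := by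
  rw [prod_comm' (t' := univ) (s' := Iio) fun i j => by simp only [mem_univ, mem_Ioi, mem_Iio,
    true_and, and_true]]
  exact prod_congr rfl fun j _ => by rw [Finset.prod_const, Fin.card_Iio]

section PairProd

variable {α M : Type*} [LinearOrder α] [CommMonoid M]

def pairProd (g : α → α → M) (S : Finset α) : M :=
  ∏ y ∈ S, ∏ x ∈ S with x < y, g x y

variable {g : α → α → M}

lemma pairProd_eq_prod_prod_filter_gt (S : Finset α) :
    pairProd g S = ∏ x ∈ S, ∏ y ∈ S with x < y, g x y :=
  prod_comm' fun _ _ => by simp only [mem_filter]; tauto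

lemma pairProd_union (hg : ∀ x y, g x y = g y x) {S T : Finset α} (h : Disjoint S T) :
    pairProd g (S ∪ T) = pairProd g S * pairProd g T * ∏ x ∈ S, ∏ y ∈ T, g x y := by
  have swap : ∏ y ∈ T, ∏ x ∈ S with x < y, g x y = ∏ x ∈ S, ∏ y ∈ T with x < y, g x y :=
    prod_comm' fun _ _ => by simp only [mem_filter]; tauto
  have cross : (∏ y ∈ S, ∏ x ∈ T with x < y, g x y) * ∏ y ∈ T, ∏ x ∈ S with x < y, g x y
      = ∏ x ∈ S, ∏ y ∈ T, g x y := by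
    rw [swap, ← prod_mul_distrib]
    refine prod_congr rfl fun x hx => ?_
    have hxT : x ∉ T := disjoint_left.1 h hx
    rw [prod_congr rfl fun y _ => hg y x, ← prod_filter_mul_prod_filter_not T (· < x)]
    congr 1
    exact prod_congr (filter_congr fun y hy => by
      have : y ≠ x := fun e => hxT (e ▸ hy)
      simp only [not_lt]; exact ⟨le_of_lt, fun h' => lt_of_le_of_ne h' this.symm⟩) fun _ _ => rfl
  unfold pairProd
  simp_rw [filter_union]
  rw [prod_union h]
  simp_rw [prod_union (disjoint_filter_filter h), prod_mul_distrib]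
  rw [← cross]
  ac_rfl

lemma prod_prod_erase_eq_pairProd_sq (hg : ∀ x y, g x y = g y x) (S : Finset α) :
    ∏ x ∈ S, ∏ y ∈ S.erase x, g x y = pairProd g S ^ 2 := by
  have split : ∀ x ∈ S, ∏ y ∈ S.erase x, g x y
      = (∏ y ∈ S with y < x, g y x) * ∏ y ∈ S with x < y, g x y := by
    intro x _
    rw [← prod_filter_mul_prod_filter_not (S.erase x) (· < x)]
    congr 1
    · exact prod_congr (by ext y; simp only [mem_filter, mem_erase]; grind) fun y _ => hg x y
    · exact prod_congr (by ext y; simp only [mem_filter, mem_erase]; grind) fun _ _ => rfl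
  rw [prod_congr rfl split, prod_mul_distrib, ← pairProd_eq_prod_prod_filter_gt, sq]
  rfl

lemma pairProd_union_mul_pairProd (hg : ∀ x y, g x y = g y x) {S T : Finset α}
    (h : Disjoint S T) :
    pairProd g (S ∪ T) * pairProd g S = pairProd g T * ∏ x ∈ S, ∏ y ∈ (S ∪ T).erase x, g x y := by
  have erase_union : ∀ x ∈ S, ∏ y ∈ (S ∪ T).erase x, g x y
      = (∏ y ∈ S.erase x, g x y) * ∏ y ∈ T, g x y := fun x hx => by
    rw [erase_union_distrib, erase_eq_of_notMem (disjoint_left.1 h hx),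
      prod_union (disjoint_of_subset_left (erase_subset x S) h)]
  rw [prod_congr rfl erase_union, prod_mul_distrib, prod_prod_erase_eq_pairProd_sq hg,
    pairProd_union hg h, sq]
  ac_rfl

lemma pairProd_range (m : ℕ) (g : ℕ → ℕ → M) :
    pairProd g (range m) = ∏ y ∈ range m, ∏ x ∈ range y, g x y :=
  prod_congr rfl fun y hy => prod_congr (by ext; simp at hy ⊢; omega) fun _ _ => rfl

lemma pairProd_range_add (g : ℕ → ℕ → M) (n k : ℕ) :
    pairProd g (range (n + k)) = pairProd g (range k) *
      ∏ l : Fin n, ∏ x ∈ range (n + k - 1 - l), g x (n + k - 1 - l) := by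
  rw [pairProd_range, pairProd_range, show range (n + k) = range (k + n) by rw [Nat.add_comm],
    prod_range_add,
    Fin.prod_univ_eq_prod_range (fun l => ∏ x ∈ range (n + k - 1 - l), g x (n + k - 1 - l)),
    ← prod_range_reflect _ n]
  congr 1
  refine prod_congr rfl fun l hl => ?_
  rw [mem_range] at hl
  rw [show k + (n - 1 - l) = n + k - 1 - l by omega]

lemma prod_prod_Ioi_eq_pairProd_image {ι : Type*} [LinearOrder ι] [Fintype ι]
    [LocallyFiniteOrderTop ι] {E : ι → α} (hE : StrictAnti E) (g : α → α → M) :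
    ∏ i, ∏ j ∈ Ioi i, g (E j) (E i) = pairProd g (univ.image E) := by
  unfold pairProd
  rw [prod_image hE.injective.injOn]
  refine prod_congr rfl fun i _ => ?_
  rw [filter_image, prod_image hE.injective.injOn]
  exact prod_congr (by ext j; simp [hE.lt_iff_gt]) fun _ _ => rfl

lemma pairProd_pos {R : Type*} [CommSemiring R] [PartialOrder R] [IsStrictOrderedRing R]
    {g : α → α → R} (hg : ∀ x y, x < y → 0 < g x y) (S : Finset α) : 0 < pairProd g S :=
  prod_pos fun y _ => prod_pos fun x hx => hg x y (mem_filter.1 hx).2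

end PairProd

section PowDist

variable {q : ℝ}

def powDist (q : ℝ) (x y : ℕ) : ℝ := |q ^ x - q ^ y|

lemma powDist_comm (q : ℝ) (x y : ℕ) : powDist q x y = powDist q y x := abs_sub_comm _ _

lemma powDist_pos (hq0 : 0 < q) (hq1 : q < 1) {x y : ℕ} (h : x ≠ y) : 0 < powDist q x y :=
  abs_pos.2 (sub_ne_zero.2 fun e => h (pow_right_injective₀ hq0 hq1.ne e))

lemma powDist_of_le (hq0 : 0 ≤ q) (hq1 : q < 1) {x y : ℕ} (h : x ≤ y) :
    powDist q x y = q ^ x * (1 - q) * qnum q (y - x) := by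
  have h1q : 1 - q ≠ 0 := sub_ne_zero.2 hq1.ne'
  rw [powDist, abs_of_nonneg (sub_nonneg.2 (pow_le_pow_of_le_one hq0 hq1.le h)), qnum,
    ← Nat.add_sub_cancel' h, pow_add, Nat.add_sub_cancel_left]
  field_simp

lemma sum_range_id_eq_choose_two (m : ℕ) : ∑ i ∈ range m, i = m.choose 2 := by
  rw [sum_range_id, Nat.choose_two_right]

lemma Nat.choose_two_add (a b : ℕ) : (a + b).choose 2 = a.choose 2 + b.choose 2 + a * b := by
  rw [← sum_range_id_eq_choose_two, ← sum_range_id_eq_choose_two, ← sum_range_id_eq_choose_two,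
    sum_range_add, sum_add_distrib, sum_const, card_range, smul_eq_mul]
  ring

lemma prod_range_powDist (hq0 : 0 ≤ q) (hq1 : q < 1) (m : ℕ) :
    ∏ x ∈ range m, powDist q x m = q ^ m.choose 2 * (1 - q) ^ m * qfact q m := by
  rw [prod_congr rfl fun x hx => powDist_of_le hq0 hq1 (mem_range.1 hx).le, prod_mul_distrib,
    prod_mul_distrib, prod_pow_eq_pow_sum, sum_range_id_eq_choose_two, prod_const, card_range,
    qfact, ← prod_range_reflect _ m]
  congr 1
  exact prod_congr rfl fun j hj => by rw [mem_range] at hj; congr 1; omega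

lemma prod_range_powDist_add (hq0 : 0 ≤ q) (hq1 : q < 1) (x m : ℕ) :
    ∏ t ∈ range m, powDist q x (x + 1 + t) = q ^ (x * m) * (1 - q) ^ m * qfact q m := by
  rw [prod_congr rfl fun t _ => powDist_of_le hq0 hq1 (by omega), prod_mul_distrib,
    prod_mul_distrib, prod_const, prod_const, card_range, ← pow_mul, qfact]
  congr 1
  exact prod_congr rfl fun t _ => by congr 1; omega

lemma prod_range_erase_powDist (hq0 : 0 ≤ q) (hq1 : q < 1) {x N : ℕ} (hx : x < N) :
    ∏ y ∈ (range N).erase x, powDist q x y =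
      q ^ (x.choose 2 + x * (N - 1 - x)) * (1 - q) ^ (N - 1) *
        (qfact q x * qfact q (N - 1 - x)) := by
  have split : (range N).erase x = range x ∪ Ico (x + 1) N := by
    ext y; simp only [mem_erase, mem_range, mem_union, mem_Ico]; omega
  have disj : Disjoint (range x) (Ico (x + 1) N) :=
    disjoint_left.2 fun y hy hy' => by simp only [mem_range, mem_Ico] at hy hy'; omega
  rw [split, prod_union disj, prod_congr rfl fun y _ => powDist_comm q x y,
    prod_range_powDist hq0 hq1, prod_Ico_eq_prod_range, prod_range_powDist_add hq0 hq1,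
    show N - (x + 1) = N - 1 - x by omega, pow_add,
    show N - 1 = x + (N - 1 - x) by omega, pow_add, Nat.add_sub_cancel_left]
  ring

lemma qfact_pos (hq0 : 0 ≤ q) (hq1 : q < 1) (m : ℕ) : 0 < qfact q m :=
  prod_pos fun _ _ => div_pos (sub_pos.2 (pow_lt_one₀ hq0 hq1 (Nat.succ_ne_zero _)))
    (sub_pos.2 hq1)

lemma pairProd_powDist_image (hq0 : 0 ≤ q) (hq1 : q < 1) {n : ℕ} {E : Fin n → ℕ}
    (hE : StrictAnti E) :
    pairProd (powDist q) (univ.image E) = (∏ j, (q ^ E j * (1 - q)) ^ (j : ℕ)) *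
      ∏ p ∈ univ.filter (fun p : Fin n × Fin n => p.1 < p.2), qnum q (E p.1 - E p.2) := by
  rw [← prod_prod_Ioi_eq_pairProd_image hE,
    prod_filter_lt_eq_prod_prod_Ioi fun i j => qnum q (E i - E j),
    ← Fin.prod_prod_Ioi_eq_prod_pow, ← prod_mul_distrib]
  exact prod_congr rfl fun i _ => by
    rw [← prod_mul_distrib]
    exact prod_congr rfl fun j hj => powDist_of_le hq0 hq1 (hE (mem_Ioi.1 hj)).le

lemma row_factor_eq (hq0 : 0 < q) (hq1 : q < 1) (a b l : ℕ) :
    q ^ (a + b).choose 2 * (1 - q) ^ (a + b) * qfact q (a + b) * (q ^ a * (1 - q)) ^ l /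
        (q ^ (a.choose 2 + a * (b + l)) * (1 - q) ^ (a + b + l) *
          (qfact q a * qfact q (b + l))) =
      q ^ b.choose 2 * (qfact q (a + b) / (qfact q a * qfact q (b + l))) := by
  have := qfact_pos hq0.le hq1 a
  have := qfact_pos hq0.le hq1 (b + l)
  have : 1 - q ≠ 0 := sub_ne_zero.2 hq1.ne'
  rw [Nat.choose_two_add, mul_pow]
  field_simp
  ring

end PowDist

section ConjugateComplement

variable {n k : ℕ} {lam : Fin n → ℕ}

lemma conj_le (j : Fin k) : conj n k lam j ≤ n :=
  (card_filter_le _ _).trans_eq (card_fin n)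

lemma conj_antitone : Antitone (conj n k lam) := fun j j' h =>
  card_le_card fun i hi => by
    simp only [mem_filter, mem_univ, true_and] at hi ⊢
    exact lt_of_le_of_lt (Fin.le_def.1 h) hi

lemma lt_conj_iff (hmono : Antitone lam) (i : Fin n) (j : Fin k) :
    (i : ℕ) < conj n k lam j ↔ (j : ℕ) < lam i := by
  constructor
  · intro h
    by_contra! hle
    have hsub : univ.filter (fun i' : Fin n => (j : ℕ) < lam i') ⊆ Iio i := fun i' hi' => by
      simp only [mem_filter, mem_univ, true_and] at hi'
      rw [mem_Iio]
      by_contra! hii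
      exact absurd (hmono hii) (by omega)
    exact absurd ((card_le_card hsub).trans_eq (Fin.card_Iio i)) (by unfold conj at h; omega)
  · intro h
    have hsub : Iic i ⊆ univ.filter (fun i' : Fin n => (j : ℕ) < lam i') := fun i' hi' => by
      simp only [mem_filter, mem_univ, true_and]
      exact h.trans_le (hmono (mem_Iic.1 hi'))
    have := (Fin.card_Iic i).symm.trans_le (card_le_card hsub)
    unfold conj
    omega

lemma strictMono_add_sub_conj : StrictMono fun j : Fin k => n + j - conj n k lam j :=
  fun j j' h => by
    have := conj_antitone (lam := lam) h.le
    have := conj_le (lam := lam) j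
    have : (j : ℕ) < j' := h
    show n + (j : ℕ) - conj n k lam j < n + j' - conj n k lam j'
    omega

variable {a : Fin n → ℕ}

lemma strictAnti_shifted_parts (ha : ∀ i, a i = lam i + (n - 1 - (i : ℕ)))
    (hmono : Antitone lam) : StrictAnti a := fun i j h => by
  have := hmono h.le
  have : (i : ℕ) < j := h
  have := j.isLt
  rw [ha, ha]
  omega

lemma disjoint_image_shifted_image_conj (ha : ∀ i, a i = lam i + (n - 1 - (i : ℕ)))
    (hmono : Antitone lam) :
    Disjoint (univ.image a) (univ.image fun j : Fin k => n + j - conj n k lam j) := by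
  simp only [disjoint_left, mem_image, mem_univ, true_and, not_exists]
  rintro _ ⟨i, rfl⟩ j hj
  -- `n + j - λ'_j` lies below `a_i` when `j < λ_i` and above it otherwise.
  have := conj_le (lam := lam) j
  have := i.isLt
  rw [ha] at hj
  by_cases h : (j : ℕ) < lam i
  · have := (lt_conj_iff hmono i j).2 h
    omega
  · have := mt (lt_conj_iff hmono i j).1 h
    omega

lemma image_shifted_union_image_conj (ha : ∀ i, a i = lam i + (n - 1 - (i : ℕ)))
    (hmono : Antitone lam) (hle : ∀ i, lam i ≤ k) :
    univ.image a ∪ univ.image (fun j : Fin k => n + j - conj n k lam j) = range (n + k) := by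
  refine eq_of_subset_of_card_le (union_subset ?_ ?_) ?_
  · simp only [subset_iff, mem_image, mem_univ, true_and, mem_range, forall_exists_index]
    rintro _ i rfl
    have := hle i
    have := i.isLt
    rw [ha]
    omega
  · simp only [subset_iff, mem_image, mem_univ, true_and, mem_range, forall_exists_index]
    rintro _ j rfl
    have := j.isLt
    omega
  · rw [card_union_of_disjoint (disjoint_image_shifted_image_conj ha hmono),
      card_image_of_injective _ (strictAnti_shifted_parts ha hmono).injective,
      card_image_of_injective _ strictMono_add_sub_conj.injective, card_univ, card_univ,
      Fintype.card_fin, Fintype.card_fin, card_range]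

end ConjugateComplement

section Schur

open Matrix

variable {q : ℝ} {k : ℕ}

lemma schur_pow_eq_det_div (μ : Fin k → ℕ) :
    schur k μ (fun j => q ^ (j : ℕ)) =
      (vandermonde fun i => q ^ (μ i + (k - 1 - i))).det /
        (vandermonde fun i : Fin k => q ^ (k - 1 - i)).det := by
  unfold schur
  congr 2 <;> ext i j <;> simp only [of_apply, vandermonde_apply, ← pow_mul, mul_comm]

lemma det_vandermonde_pow_eq_pairProd (hq0 : 0 ≤ q) (hq1 : q ≤ 1) {E : Fin k → ℕ}
    (hE : StrictAnti E) :
    (vandermonde fun i => q ^ E i).det = pairProd (powDist q) (univ.image E) := by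
  rw [det_vandermonde, ← prod_prod_Ioi_eq_pairProd_image hE]
  exact prod_congr rfl fun i _ => prod_congr rfl fun j hj =>
    (abs_of_nonneg (sub_nonneg.2 (pow_le_pow_of_le_one hq0 hq1 (hE (mem_Ioi.1 hj)).le))).symm

variable {n : ℕ} {lam : Fin n → ℕ}

lemma schur_conj_eq_pairProd_div (hq0 : 0 ≤ q) (hq1 : q ≤ 1) :
    schur k (fun j => n - conj n k lam (Fin.rev j)) (fun j => q ^ (j : ℕ)) =
      pairProd (powDist q) (univ.image fun j : Fin k => n + j - conj n k lam j) /
        pairProd (powDist q) (range k) := by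
  set e := fun j : Fin k => n + j - conj n k lam j
  have num : (fun i : Fin k => q ^ (n - conj n k lam i.rev + (k - 1 - i))) =
      fun i => q ^ (e ∘ Fin.rev) i := funext fun i => by
    have := conj_le (lam := lam) i.rev
    simp only [e, Function.comp_apply, Fin.val_rev]
    congr 1
    omega
  have den : (fun i : Fin k => q ^ (k - 1 - (i : ℕ))) = fun i => q ^ (Fin.val ∘ Fin.rev) i :=
    funext fun i => by simp only [Function.comp_apply, Fin.val_rev]; congr 1; omega
  rw [schur_pow_eq_det_div, num, den,
    det_vandermonde_pow_eq_pairProd hq0 hq1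
      (strictMono_add_sub_conj.comp_strictAnti Fin.rev_strictAnti),
    det_vandermonde_pow_eq_pairProd hq0 hq1
      (Fin.val_strictMono.comp_strictAnti Fin.rev_strictAnti),
    ← image_image, ← image_image, image_univ_of_surjective Fin.rev_surjective, image_fin_univ]

lemma schur_conj_eq_prod_div (hq0 : 0 < q) (hq1 : q < 1)
    (hmono : Antitone lam) (hle : ∀ i, lam i ≤ k) {a : Fin n → ℕ}
    (ha : ∀ i, a i = lam i + (n - 1 - (i : ℕ))) :
    schur k (fun j => n - conj n k lam (Fin.rev j)) (fun j => q ^ (j : ℕ)) =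
      (∏ l : Fin n, ∏ x ∈ range (n + k - 1 - l), powDist q x (n + k - 1 - l)) *
          pairProd (powDist q) (univ.image a) /
        ∏ l : Fin n, ∏ y ∈ (range (n + k)).erase (a l), powDist q (a l) y := by
  have hsplit := pairProd_union_mul_pairProd (powDist_comm q)
    (disjoint_image_shifted_image_conj (k := k) ha hmono)
  rw [image_shifted_union_image_conj ha hmono hle, pairProd_range_add,
    prod_image (strictAnti_shifted_parts ha hmono).injective.injOn] at hsplit
  have hk : 0 < pairProd (powDist q) (range k) :=
    pairProd_pos (fun _ _ h => powDist_pos hq0 hq1 h.ne) _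
  have hR : 0 < ∏ l : Fin n, ∏ y ∈ (range (n + k)).erase (a l), powDist q (a l) y :=
    prod_pos fun _ _ => prod_pos fun _ hy => powDist_pos hq0 hq1 (ne_of_mem_erase hy).symm
  rw [schur_conj_eq_pairProd_div hq0.le hq1.le, div_eq_div_iff hk.ne' hR.ne']
  linear_combination -hsplit

end Schur

theorem stmt17_general (n k : ℕ) (q : ℝ) (hq0 : 0 < q) (hq1 : q < 1)
    (lam : Fin n → ℕ) (hmono : Antitone lam) (hle : ∀ i, lam i ≤ k)
    (a : Fin n → ℕ) (ha : ∀ i, a i = lam i + (n - 1 - (i : ℕ))) :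
    schur k (fun j => n - conj n k lam (Fin.rev j)) (fun j => q ^ (j : ℕ)) =
      q ^ (∑ i : Fin n, (k - lam i).choose 2) *
        (∏ p ∈ Finset.univ.filter (fun p : Fin n × Fin n => p.1 < p.2),
          qnum q (a p.1 - a p.2)) *
        ∏ l : Fin n, (qfact q (n + k - 1 - (l : ℕ)) /
          (qfact q (a l) * qfact q (n + k - 1 - a l))) := by
  have row : ∀ l : Fin n,
      (∏ x ∈ range (n + k - 1 - l), powDist q x (n + k - 1 - l)) * (q ^ a l * (1 - q)) ^ (l : ℕ) /
          ∏ y ∈ (range (n + k)).erase (a l), powDist q (a l) y =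
        q ^ (k - lam l).choose 2 *
          (qfact q (n + k - 1 - l) / (qfact q (a l) * qfact q (n + k - 1 - a l))) := fun l => by
    have := hle l
    have := l.isLt
    have := ha l
    rw [prod_range_powDist hq0.le hq1, prod_range_erase_powDist hq0.le hq1 (by omega),
      show n + k - 1 - l = a l + (k - lam l) by omega,
      show n + k - 1 - a l = k - lam l + l by omega,
      show n + k - 1 = a l + (k - lam l) + l by omega]
    exact row_factor_eq hq0 hq1 _ _ _
  rw [schur_conj_eq_prod_div hq0 hq1 hmono hle ha,
    pairProd_powDist_image hq0.le hq1 (strictAnti_shifted_parts ha hmono), ← prod_pow_eq_pow_sum,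
    mul_right_comm _ (∏ p ∈ _, _), ← prod_mul_distrib, ← prod_congr rfl fun l _ => row l,
    prod_div_distrib, prod_mul_distrib]
  ring

/-- Principal specialization of the Schur polynomial of the complement
conjugate diagram `λ̄'_j = n - λ'_{k+1-j}`. -/
theorem stmt17 (n k : ℕ) (hn : 1 ≤ n) (hk : 1 ≤ k) (q : ℝ) (hq0 : 0 < q) (hq1 : q < 1)
    (lam : Fin n → ℕ) (hmono : Antitone lam) (hle : ∀ i, lam i ≤ k)
    (a : Fin n → ℕ) (ha : ∀ i, a i = lam i + (n - 1 - (i : ℕ))) :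
    schur k (fun j => n - conj n k lam (Fin.rev j)) (fun j => q ^ (j : ℕ)) =
      q ^ (∑ i : Fin n, (k - lam i).choose 2) *
        (∏ p ∈ Finset.univ.filter (fun p : Fin n × Fin n => p.1 < p.2),
          qnum q (a p.1 - a p.2)) *
        ∏ l : Fin n, (qfact q (n + k - 1 - (l : ℕ)) /
          (qfact q (a l) * qfact q (n + k - 1 - a l))) :=
  stmt17_general n k q hq0 hq1 lam hmono hle a ha
end
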